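/- Let G = (V,E) be a directed graph with |V| = n ≥ 1 and let d, h be integers with 1 ≤ d ≤ n, 1 ≤ h ≤ n and d·h ≥ 6n; set ℓ := ⌊dh/(6n)⌋ (so ℓ ≥ 1). Suppose V is partitioned into nonempty blocks B₁, …, B_m with m ≤ 2n/d such that every edge (u,v) ∈ E with u ∈ B_i and v ∈ B_j satisfies i ≤ j. Suppose further that for every block B among B₁, …, B_m a set H_B ⊆ B is given such that for all x,y ∈ B with δ_{G[B]}(x,y) < ∞, either δ_{G[B]}(x,y) < ℓ or there exists v ∈ H_B with δ_{G[B]}(x,v) ≤ ℓ and δ_{G[B]}(v,y) < ∞. Let H* := H_{B₁} ∪ ⋯ ∪ H_{B_m}. Then for all s,t ∈ V with δ_G(s,t) < ∞, either δ_G(s,t) ≤ h, or there exists v ∈ H* with δ_G(s,v) ≤ h and δ_G(v,t) < ∞. -/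

import Mathlib

/-!
Take a shortest walk from `s` to `t`, of length `k > h`. Along it the block index never
decreases, and `m ℓ ≤ h` because `m ≤ 2n/d` and `ℓ ≤ dh/(6n)`. Pigeonholing the block indices
at the positions `0, ℓ, …, m ℓ` therefore gives a segment of length `ℓ` within the first `h`
steps that stays inside one block `B`. As a subwalk of a shortest walk, its endpoints `x, y`
satisfy `δ_{G[B]}(x,y) ≥ δ_G(x,y) = ℓ`, so the hitting property of `H_B` supplies `v ∈ H_B` with
`δ_{G[B]}(x,v) ≤ ℓ` and `δ_{G[B]}(v,y) < ∞`; then `δ_G(s,v) ≤ h` and `δ_G(v,t) < ∞`.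
-/

open scoped Classical

namespace Paper

variable {V : Type*}

/-- `p` (restricted to indices `0,…,k`) is a walk of length `k` w.r.t. the edge relation `E`. -/
def IsWalk (E : V → V → Prop) (k : ℕ) (p : ℕ → V) : Prop :=
  ∀ i, i < k → E (p i) (p (i + 1))

/-- The distance `δ_G(s,t)`. -/
noncomputable def gdist (E : V → V → Prop) (s t : V) : ℕ∞ :=
  ⨅ (k : ℕ) (_ : ∃ p : ℕ → V, p 0 = s ∧ p k = t ∧ IsWalk E k p), (k : ℕ∞)

/-- The induced subgraph `G[W]`. -/
def induce (E : V → V → Prop) (W : Set V) : V → V → Prop :=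
  fun u v => E u v ∧ u ∈ W ∧ v ∈ W

section Walks

variable {E E' : V → V → Prop} {k l a : ℕ} {p q : ℕ → V}

lemma IsWalk.shift (hp : IsWalk E k p) (h : a + l ≤ k) : IsWalk E l (fun r => p (a + r)) :=
  fun r hr => hp (a + r) (by omega)

lemma IsWalk.append (hp : IsWalk E k p) (hq : IsWalk E l q) (hpq : p k = q 0) :
    IsWalk E (k + l) (fun r => if r ≤ k then p r else q (r - k)) := by
  intro r hr
  rcases lt_trichotomy r k with hrk | rfl | hkr
  · simpa [hrk.le, Nat.succ_le_of_lt hrk] using hp r hrk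
  · simpa [hpq] using hq 0 (by omega)
  · have hstep : r + 1 - k = r - k + 1 := by omega
    simpa [hkr.not_ge, (hkr.trans (Nat.lt_succ_self r)).not_ge, hstep] using hq (r - k) (by omega)

lemma IsWalk.induce {W : Set V} (hp : IsWalk E k p) (hW : ∀ r ≤ k, p r ∈ W) :
    IsWalk (induce E W) k p :=
  fun r hr => ⟨hp r hr, hW r hr.le, hW (r + 1) hr⟩

lemma gdist_le_of_isWalk {s t : V} (hp : IsWalk E k p) (h0 : p 0 = s) (hk : p k = t) :
    gdist E s t ≤ k :=
  iInf₂_le k ⟨p, h0, hk, hp⟩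

lemma IsWalk.gdist_le (hp : IsWalk E k p) (h : a + l ≤ k) : gdist E (p a) (p (a + l)) ≤ l :=
  gdist_le_of_isWalk (hp.shift h) (by simp) rfl

lemma exists_isWalk_of_gdist_ne_top {s t : V} (h : gdist E s t ≠ ⊤) :
    ∃ k p, p 0 = s ∧ p k = t ∧ IsWalk E k p ∧ gdist E s t = k := by
  have hex : ∃ k p, p 0 = s ∧ p k = t ∧ IsWalk E k p := by
    by_contra hno
    exact h (iInf₂_eq_top.2 fun k hk => absurd hk fun h' => hno ⟨k, h'⟩)
  obtain ⟨p, h0, hk, hp⟩ := Nat.find_spec hex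
  exact ⟨_, p, h0, hk, hp, (gdist_le_of_isWalk hp h0 hk).antisymm
    (le_iInf₂ fun k hk => Nat.cast_le.2 (Nat.find_min' hex hk))⟩

lemma gdist_triangle (s u t : V) : gdist E s t ≤ gdist E s u + gdist E u t := by
  by_cases hsu : gdist E s u = ⊤
  · simp [hsu]
  by_cases hut : gdist E u t = ⊤
  · simp [hut]
  obtain ⟨k, p, rfl, rfl, hp, hk⟩ := exists_isWalk_of_gdist_ne_top hsu
  obtain ⟨l, q, hq0, rfl, hq, hl⟩ := exists_isWalk_of_gdist_ne_top hut
  rw [hk, hl, ← Nat.cast_add]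
  exact gdist_le_of_isWalk (hp.append hq hq0.symm) (by simp)
    (by by_cases hl0 : l = 0 <;> simp [hl0, hq0])

lemma gdist_anti (hE : ∀ u v, E u v → E' u v) (s t : V) : gdist E' s t ≤ gdist E s t :=
  le_iInf₂ fun _ ⟨_, h0, hk, hp⟩ => gdist_le_of_isWalk (fun r hr => hE _ _ (hp r hr)) h0 hk

lemma gdist_le_gdist_induce (W : Set V) (s t : V) : gdist E s t ≤ gdist (induce E W) s t :=
  gdist_anti (fun _ _ h => h.1) s t

lemma IsWalk.gdist_segment_eq (hp : IsWalk E k p) (hk : gdist E (p 0) (p k) = k)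
    (h : a + l ≤ k) : gdist E (p a) (p (a + l)) = l := by
  obtain ⟨c, hc⟩ :=
    ENat.ne_top_iff_exists.1 (ne_top_of_le_ne_top (ENat.natCast_ne_top l) (hp.gdist_le h))
  have hcl : c ≤ l := by exact_mod_cast hc ▸ hp.gdist_le h
  have hend : a + l + (k - (a + l)) = k := by omega
  have hlong : (k : ℕ∞) ≤ a + c + (k - (a + l) : ℕ) :=
    calc (k : ℕ∞) = gdist E (p 0) (p k) := hk.symm
      _ ≤ gdist E (p 0) (p a) + gdist E (p a) (p (a + l)) + gdist E (p (a + l)) (p k) :=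
        (gdist_triangle _ (p (a + l)) _).trans (add_le_add (gdist_triangle _ _ _) le_rfl)
      _ ≤ a + c + (k - (a + l) : ℕ) := by
        gcongr
        · simpa using hp.gdist_le (a := 0) (l := a) (by omega)
        · exact hc.ge
        · simpa [hend] using hp.gdist_le (a := a + l) (l := k - (a + l)) (by omega)
  have : k ≤ a + c + (k - (a + l)) := by exact_mod_cast hlong
  rw [← hc]
  exact_mod_cast (show c = l by omega)

end Walks

lemma exists_apply_eq_apply_add_of_monotoneOn {α : Type*} [PartialOrder α] [Fintype α]
    {f : ℕ → α} {ℓ : ℕ} (hf : MonotoneOn f (Set.Iic (Fintype.card α * ℓ))) :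
    ∃ j, j + ℓ ≤ Fintype.card α * ℓ ∧ f j = f (j + ℓ) := by
  obtain ⟨r, r', hne, hrr'⟩ := Fintype.exists_ne_map_eq_of_card_lt
    (fun r : Fin (Fintype.card α + 1) => f (r * ℓ)) (by simp)
  wlog hlt : r < r' generalizing r r'
  · exact this r' r hne.symm hrr'.symm (hne.symm.lt_of_le (not_lt.1 hlt))
  have hstep : (r : ℕ) * ℓ + ℓ ≤ r' * ℓ := by
    rw [← Nat.succ_mul]; exact Nat.mul_le_mul_right ℓ hlt
  have hr' : (r' : ℕ) * ℓ ≤ Fintype.card α * ℓ :=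
    Nat.mul_le_mul_right ℓ (Nat.lt_succ_iff.1 r'.2)
  refine ⟨r * ℓ, hstep.trans hr', le_antisymm ?_ ?_⟩
  · exact hf (Set.mem_Iic.2 (by omega)) (Set.mem_Iic.2 (hstep.trans hr')) (by omega)
  · exact (hf (Set.mem_Iic.2 (hstep.trans hr')) (Set.mem_Iic.2 hr') hstep).trans_eq hrr'.symm

lemma IsWalk.exists_segment_mem_block {E : V → V → Prop} {m k ℓ : ℕ} {B : Fin m → Set V}
    {p : ℕ → V} (hcover : ∀ v, ∃ i, v ∈ B i)
    (htopo : ∀ u v, E u v → ∀ i j, u ∈ B i → v ∈ B j → i ≤ j)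
    (hp : IsWalk E k p) (hk : m * ℓ ≤ k) :
    ∃ j i, j + ℓ ≤ m * ℓ ∧ ∀ r ≤ ℓ, p (j + r) ∈ B i := by
  choose f hf using fun r => hcover (p r)
  have hmono : MonotoneOn f (Set.Iic k) := monotoneOn_of_le_succ Set.ordConnected_Iic
    fun r _ _ hr => htopo _ _ (hp r (Order.succ_le_iff.1 hr)) _ _ (hf r) (hf (r + 1))
  obtain ⟨j, hj, hfj⟩ := exists_apply_eq_apply_add_of_monotoneOn
    (hmono.mono (Set.Iic_subset_Iic.2 ((Fintype.card_fin m).symm ▸ hk)))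
  rw [Fintype.card_fin] at hj
  refine ⟨j, f j, hj, fun r hr => ?_⟩
  have hle : f (j + r) ≤ f (j + ℓ) := hmono (show _ ≤ k by omega) (show _ ≤ k by omega) (by omega)
  have hge : f j ≤ f (j + r) := hmono (show _ ≤ k by omega) (show _ ≤ k by omega) (by omega)
  have hconst : f (j + r) = f j := le_antisymm (hle.trans_eq hfj.symm) hge
  exact hconst ▸ hf (j + r)

lemma nat_mul_div_le_of_le_div {m n d h : ℕ} (hm : (m : ℝ) ≤ 2 * (n : ℝ) / (d : ℝ)) :
    m * (d * h / (6 * n)) ≤ h := by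
  rcases Nat.eq_zero_or_pos n with rfl | hn
  · simp
  rcases Nat.eq_zero_or_pos d with rfl | hd
  · simp
  have hmd : m * d ≤ 2 * n := by
    rw [le_div_iff₀ (by exact_mod_cast hd)] at hm
    exact_mod_cast hm
  have hℓ : d * h / (6 * n) * (6 * n) ≤ d * h := Nat.div_mul_le_self _ _
  refine Nat.le_of_mul_le_mul_left ?_ (show 0 < 6 * n by omega)
  nlinarith

theorem block_hitting_general {V : Type*}
    (E : V → V → Prop) (n d h : ℕ)
    (m : ℕ) (B : Fin m → Set V)
    (hm : (m : ℝ) ≤ 2 * (n : ℝ) / (d : ℝ))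
    (hBcover : ∀ v : V, ∃ i, v ∈ B i)
    (hTopo : ∀ u v : V, E u v → ∀ i j, u ∈ B i → v ∈ B j → i ≤ j)
    (HB : Fin m → Set V)
    (hHit : ∀ i, ∀ x ∈ B i, ∀ y ∈ B i, gdist (induce E (B i)) x y ≠ ⊤ →
      gdist (induce E (B i)) x y < ((d * h / (6 * n) : ℕ) : ℕ∞) ∨
      ∃ v ∈ HB i, gdist (induce E (B i)) x v ≤ ((d * h / (6 * n) : ℕ) : ℕ∞) ∧
        gdist (induce E (B i)) v y ≠ ⊤) :
    ∀ s t : V, gdist E s t ≠ ⊤ →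
      gdist E s t ≤ (h : ℕ∞) ∨
      ∃ v : V, (∃ i, v ∈ HB i) ∧ gdist E s v ≤ (h : ℕ∞) ∧ gdist E v t ≠ ⊤ := by
  intro s t hst
  obtain ⟨k, p, rfl, rfl, hp, hk⟩ := exists_isWalk_of_gdist_ne_top hst
  rcases le_or_gt k h with hkh | hhk
  · exact .inl (hk ▸ Nat.cast_le.2 hkh)
  right
  have hmℓ := nat_mul_div_le_of_le_div (h := h) hm
  generalize d * h / (6 * n) = ℓ at hHit hmℓ
  obtain ⟨j, i, hj, hmem⟩ := hp.exists_segment_mem_block hBcover hTopo (hmℓ.trans hhk.le)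
  have hxy : gdist (induce E (B i)) (p j) (p (j + ℓ)) ≤ ℓ :=
    gdist_le_of_isWalk ((hp.shift (by omega)).induce hmem) (by simp) rfl
  have hx : p j ∈ B i := by simpa using hmem 0 (Nat.zero_le _)
  rcases hHit i _ hx _ (hmem ℓ le_rfl) (ne_top_of_le_ne_top (ENat.natCast_ne_top ℓ) hxy)
    with hshort | ⟨v, hv, hxv, hvy⟩
  · have hgeo := hp.gdist_segment_eq hk (a := j) (l := ℓ) (by omega)
    exact absurd (hgeo ▸ gdist_le_gdist_induce (B i) _ _) (not_le.2 hshort)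
  refine ⟨v, ⟨i, hv⟩, ?_, ?_⟩
  · calc gdist E (p 0) v ≤ gdist E (p 0) (p (0 + j)) + gdist E (p j) v := by
          simpa using gdist_triangle (p 0) (p j) v
      _ ≤ (j + ℓ : ℕ) := by
          push_cast
          exact add_le_add (hp.gdist_le (a := 0) (l := j) (by omega))
            ((gdist_le_gdist_induce _ _ _).trans hxv)
      _ ≤ h := by exact_mod_cast (by omega : j + ℓ ≤ h)
  · have hyt := hp.gdist_le (a := j + ℓ) (l := k - (j + ℓ)) (by omega)
    rw [show j + ℓ + (k - (j + ℓ)) = k by omega] at hyt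
    refine ne_top_of_le_ne_top (WithTop.add_ne_top.2 ⟨?_, ?_⟩)
      (gdist_triangle v (p (j + ℓ)) (p k))
    · exact ne_top_of_le_ne_top hvy (gdist_le_gdist_induce _ _ _)
    · exact ne_top_of_le_ne_top (ENat.natCast_ne_top _) hyt

/-- **Lemma 7.2, self-contained.** With `ℓ := ⌊dh/(6n)⌋`, if `V` is partitioned into at most
`2n/d` blocks `B₁,…,B_m` respecting a topological order (no edge goes from a later block to an
earlier one) and every block `B` carries a weak hitting set `H_B ⊆ B` with parameter `ℓ` for
`G[B]`, then `H* = ⋃ H_B` satisfies: for all `s,t` with `δ_G(s,t) < ∞`, either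
`δ_G(s,t) ≤ h` or there is `v ∈ H*` with `δ_G(s,v) ≤ h` and `δ_G(v,t) < ∞`. -/
theorem block_hitting {V : Type*} [Fintype V]
    (E : V → V → Prop) (n d h : ℕ)
    (hn : Fintype.card V = n) (hn1 : 1 ≤ n)
    (hd1 : 1 ≤ d) (hdn : d ≤ n) (hh1 : 1 ≤ h) (hhn : h ≤ n)
    (hdh : 6 * n ≤ d * h)
    (m : ℕ) (B : Fin m → Set V)
    (hm : (m : ℝ) ≤ 2 * (n : ℝ) / (d : ℝ))
    (hBne : ∀ i, (B i).Nonempty)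
    (hBdisj : ∀ i j, i ≠ j → Disjoint (B i) (B j))
    (hBcover : ∀ v : V, ∃ i, v ∈ B i)
    (hTopo : ∀ u v : V, E u v → ∀ i j, u ∈ B i → v ∈ B j → i ≤ j)
    (HB : Fin m → Set V)
    (hHBsub : ∀ i, HB i ⊆ B i)
    (hHit : ∀ i, ∀ x ∈ B i, ∀ y ∈ B i, gdist (induce E (B i)) x y ≠ ⊤ →
      gdist (induce E (B i)) x y < ((d * h / (6 * n) : ℕ) : ℕ∞) ∨
      ∃ v ∈ HB i, gdist (induce E (B i)) x v ≤ ((d * h / (6 * n) : ℕ) : ℕ∞) ∧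
        gdist (induce E (B i)) v y ≠ ⊤) :
    ∀ s t : V, gdist E s t ≠ ⊤ →
      gdist E s t ≤ (h : ℕ∞) ∨
      ∃ v : V, (∃ i, v ∈ HB i) ∧ gdist E s v ≤ (h : ℕ∞) ∧ gdist E v t ≠ ⊤ :=
  block_hitting_general E n d h m B hm hBcover hTopo HB hHit

end Paper
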